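/- arXiv:2503.14664 — 2 statements merged into one kernel-verified Lean document; each statement's English description precedes it below -/
import Mathlib

section
/- Let Λ be a non-ordinary numerical semigroup with conductor c = c(Λ), jump u = u(Λ) and ω = ω(Λ). Let σ be an integer with c ≤ σ < c + u (so σ ∈ Λ). Then σ is a right generator of Λ if and only if either σ ≢ 0 (mod ω), or σ ≡ 0 (mod ω) and σ/ω ∉ shrink(Λ). -/
/-!
If `σ = a + b` with `a, b` positive elements of `Λ` and `c ≤ σ < c + u`, then neither summand can
exceed the Frobenius number `F`: otherwise the other one would be a positive element smaller than
`u ≤ m`. So `σ` is decomposable exactly when it lies in the monoid generated by the left elements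
(an element of that monoid above `F` is not itself a left element, hence is a sum of two positive
ones). Since all left elements are multiples of `ω`, dividing by `ω` identifies that monoid with
`ω · shrink(Λ)`.
-/

open Pointwise

namespace NumSgpPaper

/-- `S` is a numerical semigroup: an additive submonoid of ℕ with finite complement. -/
structure IsNumSgp (S : Set ℕ) : Prop where
  zero_mem : 0 ∈ S
  add_mem : ∀ ⦃a b : ℕ⦄, a ∈ S → b ∈ S → a + b ∈ S
  cofinite : Sᶜ.Finite

/-- The Frobenius number: the largest gap of `S` (junk value `0` if there are no gaps). -/
noncomputable def frob (S : Set ℕ) : ℕ := sSup Sᶜ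

open Classical in
/-- The conductor: one plus the largest gap, and `0` if there are no gaps (so `c(ℕ) = 0`). -/
noncomputable def conductor (S : Set ℕ) : ℕ := if Sᶜ = ∅ then 0 else frob S + 1

/-- The genus: the number of gaps. -/
noncomputable def genus (S : Set ℕ) : ℕ := Sᶜ.ncard

/-- The multiplicity: the smallest positive element. -/
noncomputable def mult (S : Set ℕ) : ℕ := sInf {n : ℕ | n ∈ S ∧ 0 < n}

/-- The jump: the difference between the second and first positive elements. -/
noncomputable def jump (S : Set ℕ) : ℕ := sInf {n : ℕ | n ∈ S ∧ mult S < n} - mult S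

/-- A minimal generator: a positive element of `S` that is not the sum of
two positive elements of `S`. -/
def IsMinGen (S : Set ℕ) (x : ℕ) : Prop :=
  0 < x ∧ x ∈ S ∧ ¬ ∃ a b : ℕ, 0 < a ∧ 0 < b ∧ a ∈ S ∧ b ∈ S ∧ a + b = x

/-- A right generator: a minimal generator larger than the Frobenius number. -/
def IsRightGen (S : Set ℕ) (x : ℕ) : Prop := IsMinGen S x ∧ frob S < x

/-- A strong generator: a right generator `σ` such that `σ + m(S)` is a minimal
generator of `S \ {σ}`. -/
def IsStrongGen (S : Set ℕ) (σ : ℕ) : Prop :=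
  IsRightGen S σ ∧ IsMinGen (S \ {σ}) (σ + mult S)

/-- `S` is ordinary when its gaps are exactly `{1, …, g(S)}`. -/
def IsOrdinary (S : Set ℕ) : Prop := Sᶜ = Set.Icc 1 (genus S)

/-- The left elements: the elements of `S` smaller than the Frobenius number. -/
def leftEls (S : Set ℕ) : Set ℕ := {x : ℕ | x ∈ S ∧ x < frob S}

/-- The gcd of a set of natural numbers. -/
noncomputable def setGcd (A : Set ℕ) : ℕ :=
  sInf {d : ℕ | (∀ a ∈ A, d ∣ a) ∧ ∀ e : ℕ, (∀ a ∈ A, e ∣ a) → e ∣ d}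

/-- `ω(S)`: the gcd of the left elements of `S`. -/
noncomputable def omega' (S : Set ℕ) : ℕ := setGcd (leftEls S)

/-- The shrinking of `S`: the additive submonoid of ℕ generated by the left
elements divided by their gcd. -/
noncomputable def shrink (S : Set ℕ) : Set ℕ :=
  (AddSubmonoid.closure ((fun x => x / omega' S) '' leftEls S) : AddSubmonoid ℕ)

/-- `T` is a descendant of `S`: a numerical semigroup contained in `S` all of whose
missing elements lie beyond the Frobenius number of `S`. -/
def IsDescendant (S T : Set ℕ) : Prop :=
  IsNumSgp T ∧ T ⊆ S ∧ ∀ x ∈ S \ T, frob S < x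

/-- The pseudo-ordinary semigroup `P_{m,u} = {0, m} ∪ {n : n ≥ m + u}`. -/
def P (m u : ℕ) : Set ℕ := {0, m} ∪ {n : ℕ | m + u ≤ n}

/-- The submonoid of ℕ generated by the interval `{a, …, b}`. -/
def intervalSgp (a b : ℕ) : Set ℕ := (AddSubmonoid.closure (Set.Icc a b) : AddSubmonoid ℕ)

variable {S A : Set ℕ}

lemma compl_nonempty_of_not_isOrdinary (hord : ¬ IsOrdinary S) : Sᶜ.Nonempty := by
  rw [Set.nonempty_iff_ne_empty]
  intro hempty
  apply hord
  simp [IsOrdinary, genus, hempty]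

lemma conductor_eq_frob_add_one (hne : Sᶜ.Nonempty) : conductor S = frob S + 1 := by
  rw [conductor, if_neg hne.ne_empty]

lemma mult_le {x : ℕ} (hx : x ∈ S) (hpos : 0 < x) : mult S ≤ x := Nat.sInf_le ⟨hx, hpos⟩

def IsDecomposable (S : Set ℕ) (x : ℕ) : Prop :=
  ∃ a b : ℕ, 0 < a ∧ 0 < b ∧ a ∈ S ∧ b ∈ S ∧ a + b = x

lemma isRightGen_iff_not_isDecomposable {x : ℕ} (hx : x ∈ S) (hFx : frob S < x) :
    IsRightGen S x ↔ ¬ IsDecomposable S x :=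
  ⟨fun hgen => hgen.1.2.2, fun hnd => ⟨⟨by omega, hx, hnd⟩, hFx⟩⟩

lemma leftEls_finite : (leftEls S).Finite :=
  (Set.finite_Iio (frob S)).subset fun _ hx => hx.2

lemma setGcd_dvd (hA : A.Finite) {a : ℕ} (ha : a ∈ A) : setGcd A ∣ a := by
  classical
  set g := hA.toFinset.gcd id
  have hg_dvd : ∀ b ∈ A, g ∣ b := fun b hb => Finset.gcd_dvd (f := id) (hA.mem_toFinset.2 hb)
  have hdvd_g : ∀ e : ℕ, (∀ b ∈ A, e ∣ b) → e ∣ g := fun e he =>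
    Finset.dvd_gcd fun b hb => he b (hA.mem_toFinset.1 hb)
  have hgcds : {d : ℕ | (∀ b ∈ A, d ∣ b) ∧ ∀ e : ℕ, (∀ b ∈ A, e ∣ b) → e ∣ d} = {g} := by
    ext d
    refine ⟨fun ⟨hd, hmax⟩ => Nat.dvd_antisymm (hdvd_g d hd) (hmax g hg_dvd), ?_⟩
    rintro rfl
    exact ⟨hg_dvd, hdvd_g⟩
  rw [setGcd, hgcds, csInf_singleton]
  exact hg_dvd a ha

lemma omega'_dvd {x : ℕ} (hx : x ∈ leftEls S) : omega' S ∣ x := setGcd_dvd leftEls_finite hx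

lemma mem_closure_iff_of_forall_dvd {d : ℕ} (hd : 0 < d) (hA : ∀ a ∈ A, d ∣ a) {x : ℕ} :
    x ∈ AddSubmonoid.closure A ↔
      d ∣ x ∧ x / d ∈ AddSubmonoid.closure ((· / d) '' A) := by
  have himage : AddMonoidHom.mulLeft d '' ((· / d) '' A) = A := by
    rw [Set.image_image]
    convert Set.image_id A using 2 with a ha
    exact Nat.mul_div_cancel' (hA a ha)
  conv_lhs => rw [← himage, ← AddMonoidHom.map_mclosure, AddSubmonoid.mem_map]
  constructor
  · rintro ⟨t, ht, rfl⟩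
    simpa [Nat.mul_div_cancel_left t hd] using ht
  · rintro ⟨⟨t, rfl⟩, ht⟩
    exact ⟨t, by simpa [Nat.mul_div_cancel_left t hd] using ht, rfl⟩

namespace IsNumSgp

variable (hS : IsNumSgp S)
include hS

lemma mem_of_frob_lt {n : ℕ} (hn : frob S < n) : n ∈ S := by
  by_contra hnS
  exact absurd (le_csSup hS.cofinite.bddAbove hnS) (not_le.2 hn)

lemma frob_not_mem (hne : Sᶜ.Nonempty) : frob S ∉ S :=
  Nat.sSup_mem hne hS.cofinite.bddAbove

lemma mult_mem_and_pos : mult S ∈ S ∧ 0 < mult S :=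
  Nat.sInf_mem (s := {n | n ∈ S ∧ 0 < n})
    ⟨frob S + 1, hS.mem_of_frob_lt (Nat.lt_succ_self _), Nat.succ_pos _⟩

lemma jump_le_mult : jump S ≤ mult S := by
  obtain ⟨hmS, hm⟩ := hS.mult_mem_and_pos
  have h2m : sInf {n | n ∈ S ∧ mult S < n} ≤ mult S + mult S :=
    Nat.sInf_le ⟨hS.add_mem hmS hmS, by omega⟩
  rw [jump]
  omega

lemma mult_lt_frob (hord : ¬ IsOrdinary S) : mult S < frob S := by
  by_contra! hFm
  apply hord
  have hgaps : Sᶜ = Set.Icc 1 (frob S) := by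
    ext x
    simp only [Set.mem_compl_iff, Set.mem_Icc]
    constructor
    · intro hx
      refine ⟨Nat.one_le_iff_ne_zero.2 ?_, le_csSup hS.cofinite.bddAbove hx⟩
      rintro rfl
      exact hx hS.zero_mem
    · rintro ⟨hx1, hxF⟩ hx
      have hxeq : x = frob S := le_antisymm hxF (hFm.trans (mult_le hx hx1))
      exact hS.frob_not_mem (compl_nonempty_of_not_isOrdinary hord) (hxeq ▸ hx)
  have hgenus : genus S = frob S := by
    rw [genus, hgaps, Set.ncard_eq_toFinset_card']
    simp
  rw [IsOrdinary, hgenus, hgaps]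

lemma omega'_pos (hord : ¬ IsOrdinary S) : 0 < omega' S := by
  obtain ⟨hmS, hm⟩ := hS.mult_mem_and_pos
  exact Nat.pos_of_dvd_of_pos (omega'_dvd ⟨hmS, hS.mult_lt_frob hord⟩) hm

lemma lt_frob_of_add_lt_conductor_add_jump (hne : Sᶜ.Nonempty) {a b : ℕ} (ha : a ∈ S)
    (hb : b ∈ S) (hb0 : 0 < b)
    (hab : a + b < conductor S + jump S) : a < frob S := by
  have haF : a ≠ frob S := fun h => hS.frob_not_mem hne (h ▸ ha)
  have hmb := mult_le hb hb0
  have := hS.jump_le_mult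
  rw [conductor_eq_frob_add_one hne] at hab
  omega

lemma mem_or_isDecomposable_of_mem_closure (hA : A ⊆ S) {x : ℕ}
    (hx : x ∈ AddSubmonoid.closure A) : x = 0 ∨ x ∈ A ∨ IsDecomposable S x := by
  suffices x ∈ S ∧ (x = 0 ∨ x ∈ A ∨ IsDecomposable S x) from this.2
  induction hx using AddSubmonoid.closure_induction with
  | mem y hy => exact ⟨hA hy, Or.inr (Or.inl hy)⟩
  | zero => exact ⟨hS.zero_mem, Or.inl rfl⟩
  | add y z _ _ hy hz =>
    refine ⟨hS.add_mem hy.1 hz.1, ?_⟩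
    rcases Nat.eq_zero_or_pos y with rfl | hy0
    · simpa using hz.2
    rcases Nat.eq_zero_or_pos z with rfl | hz0
    · simpa using hy.2
    exact Or.inr (Or.inr ⟨y, z, hy0, hz0, hy.1, hz.1, rfl⟩)

lemma isDecomposable_iff_mem_closure_leftEls (hord : ¬ IsOrdinary S) {σ : ℕ}
    (h1 : conductor S ≤ σ) (h2 : σ < conductor S + jump S) :
    IsDecomposable S σ ↔ σ ∈ AddSubmonoid.closure (leftEls S) := by
  have hne := compl_nonempty_of_not_isOrdinary hord
  have hFσ : frob S < σ := by rw [conductor_eq_frob_add_one hne] at h1; omega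
  constructor
  · rintro ⟨a, b, ha0, hb0, ha, hb, rfl⟩
    have haL : a ∈ leftEls S := ⟨ha, hS.lt_frob_of_add_lt_conductor_add_jump hne ha hb hb0 h2⟩
    have hbL : b ∈ leftEls S :=
      ⟨hb, hS.lt_frob_of_add_lt_conductor_add_jump hne hb ha ha0 (by omega)⟩
    exact AddSubmonoid.add_mem _ (AddSubmonoid.subset_closure haL)
      (AddSubmonoid.subset_closure hbL)
  · intro hσ
    rcases hS.mem_or_isDecomposable_of_mem_closure (fun _ hx => hx.1) hσ with h0 | hL | hdec
    · omega
    · exact absurd hL.2 (by omega)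
    · exact hdec

end IsNumSgp

/-- For `c ≤ σ < c + u`, `σ` is a right generator of the non-ordinary semigroup `Λ`
iff either `ω ∤ σ`, or `ω ∣ σ` and `σ/ω ∉ shrink(Λ)`. -/
theorem stmt5 (Λ : Set ℕ) (h : IsNumSgp Λ) (hord : ¬ IsOrdinary Λ)
    (σ : ℕ) (h1 : conductor Λ ≤ σ) (h2 : σ < conductor Λ + jump Λ) :
    IsRightGen Λ σ ↔
      (¬ omega' Λ ∣ σ) ∨ (omega' Λ ∣ σ ∧ σ / omega' Λ ∉ shrink Λ) := by
  have hFσ : frob Λ < σ := by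
    rw [conductor_eq_frob_add_one (compl_nonempty_of_not_isOrdinary hord)] at h1
    omega
  rw [isRightGen_iff_not_isDecomposable (h.mem_of_frob_lt hFσ) hFσ,
    h.isDecomposable_iff_mem_closure_leftEls hord h1 h2,
    mem_closure_iff_of_forall_dvd (h.omega'_pos hord) fun _ => omega'_dvd]
  unfold shrink
  tauto

end NumSgpPaper
end

section
/- Let Λ ≠ ℕ be a numerical semigroup. (i) If ω(Λ) ≠ 1, then for every integer γ ≥ g(Λ) there exists a descendant of Λ of genus γ. (ii) If ω(Λ) = 1, then every descendant of Λ has genus at most g(shrink(Λ)), and Λ has exactly one descendant of genus g(shrink(Λ)). -/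
open Pointwise

namespace NumSgpPaper

/-! The descendants of `Λ` are squeezed between the semigroup generated by the left elements
(which every descendant contains) and `Λ` itself. If the left elements have gcd `1`, that
semigroup has finite complement, so it is the smallest descendant and has the largest genus.
Otherwise, with `ω = ω(Λ)`, removing from `Λ` the non-multiples of `ω` below a threshold `n`
keeps a descendant, and its genus grows one step at a time without bound as `n` increases,
so it hits every value `≥ g(Λ)`. -/

lemma setGcd_eq_natSetGcd (A : Set ℕ) : setGcd A = Nat.setGcd A := by
  have hA : {d : ℕ | (∀ a ∈ A, d ∣ a) ∧ ∀ e : ℕ, (∀ a ∈ A, e ∣ a) → e ∣ d} =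
      {Nat.setGcd A} := by
    ext d
    refine ⟨fun ⟨hdA, hd⟩ => Nat.dvd_antisymm (Nat.dvd_setGcd_iff.mpr hdA)
      (hd _ fun _ => Nat.setGcd_dvd_of_mem), ?_⟩
    rintro rfl
    exact ⟨fun _ => Nat.setGcd_dvd_of_mem, fun _ => Nat.dvd_setGcd_iff.mpr⟩
  rw [setGcd, hA, csInf_singleton]

lemma omega'_dvd_of_mem_leftEls {S : Set ℕ} {x : ℕ} (hx : x ∈ leftEls S) : omega' S ∣ x := by
  rw [omega', setGcd_eq_natSetGcd]
  exact Nat.setGcd_dvd_of_mem hx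

lemma genus_le_of_subset {S T : Set ℕ} (hST : S ⊆ T) (hS : Sᶜ.Finite) : genus T ≤ genus S :=
  Set.ncard_le_ncard (Set.compl_subset_compl.mpr hST) hS

lemma eq_of_subset_of_genus_eq {S T : Set ℕ} (hST : S ⊆ T) (hS : Sᶜ.Finite)
    (hg : genus T = genus S) : S = T :=
  compl_injective (Set.eq_of_subset_of_ncard_le (Set.compl_subset_compl.mpr hST) hg.ge hS).symm

lemma genus_eq_genus_add_ncard_diff {S T : Set ℕ} (hTS : T ⊆ S) (hS : Sᶜ.Finite)
    (hST : (S \ T).Finite) : genus T = genus S + (S \ T).ncard := by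
  have hcompl : Tᶜ = Sᶜ ∪ S \ T := by
    ext x
    by_cases hx : x ∈ S
    · simp [hx]
    · simpa [hx] using mt (@hTS x) hx
  rw [genus, genus, hcompl,
    Set.ncard_union_eq (disjoint_compl_left.mono_right Set.sdiff_subset) hS hST]

namespace IsNumSgp

variable {S : Set ℕ}

def toAddSubmonoid (h : IsNumSgp S) : AddSubmonoid ℕ where
  carrier := S
  add_mem' := fun ha hb => h.add_mem ha hb
  zero_mem' := h.zero_mem

lemma mem_of_frob_lt_s14 (h : IsNumSgp S) {x : ℕ} (hx : frob S < x) : x ∈ S := by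
  by_contra hxS
  exact hx.not_ge (le_csSup h.cofinite.bddAbove hxS)

lemma frob_notMem (h : IsNumSgp S) (hS : S ≠ Set.univ) : frob S ∉ S :=
  Nat.sSup_mem (Set.nonempty_compl.mpr hS) h.cofinite.bddAbove

lemma frob_lt_of_mem_of_notMem_leftEls (h : IsNumSgp S) (hS : S ≠ Set.univ) {x : ℕ} (hx : x ∈ S)
    (hxL : x ∉ leftEls S) : frob S < x := by
  have hFx : frob S ≤ x := not_lt.mp fun hlt => hxL ⟨hx, hlt⟩
  exact hFx.lt_of_ne fun hFx => h.frob_notMem hS (hFx ▸ hx)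

end IsNumSgp

def sieve (S : Set ℕ) (d n : ℕ) : Set ℕ := {x | x ∈ S ∧ (d ∣ x ∨ n ≤ x)}

lemma IsNumSgp.sieve {S : Set ℕ} (h : IsNumSgp S) (d n : ℕ) : IsNumSgp (sieve S d n) where
  zero_mem := ⟨h.zero_mem, .inl (dvd_zero d)⟩
  add_mem := by
    rintro a b ⟨haS, ha | ha⟩ ⟨hbS, hb | hb⟩
    · exact ⟨h.add_mem haS hbS, .inl (dvd_add ha hb)⟩
    all_goals exact ⟨h.add_mem haS hbS, .inr (by omega)⟩
  cofinite := by
    refine (h.cofinite.union (Set.finite_Iio n)).subset fun x hx => ?_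
    by_cases hxS : x ∈ S
    · exact .inr (not_le.mp fun hnx => hx ⟨hxS, .inr hnx⟩)
    · exact .inl hxS

lemma isDescendant_sieve {S : Set ℕ} (h : IsNumSgp S) (hS : S ≠ Set.univ) {d : ℕ} (n : ℕ)
    (hd : ∀ x ∈ leftEls S, d ∣ x) : IsDescendant S (sieve S d n) :=
  ⟨h.sieve d n, fun _ hx => hx.1, fun x hx =>
    h.frob_lt_of_mem_of_notMem_leftEls hS hx.1 fun hxL => hx.2 ⟨hx.1, .inl (hd x hxL)⟩⟩

open Classical in
lemma genus_sieve {S : Set ℕ} (h : IsNumSgp S) (d n : ℕ) :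
    genus (sieve S d n) = genus S + Nat.count (fun x => x ∈ S ∧ ¬ d ∣ x) n := by
  have hdiff : S \ sieve S d n = ↑({x ∈ Finset.range n | x ∈ S ∧ ¬ d ∣ x}) := by
    ext x
    simp only [sieve, Set.mem_sdiff, Set.mem_ofPred_eq, Finset.coe_filter, Finset.mem_range,
      not_and, not_or, not_le]
    tauto
  rw [genus_eq_genus_add_ncard_diff (fun _ hx => hx.1) h.cofinite (hdiff ▸ Finset.finite_toSet _),
    hdiff, Set.ncard_coe_finset, Nat.count_eq_card_filter_range]

lemma exists_lt_not_dvd {d : ℕ} (hd : d ≠ 1) (b : ℕ) : ∃ x, b < x ∧ ¬ d ∣ x := by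
  by_contra! hall
  exact hd (Nat.dvd_one.mp ((Nat.dvd_add_right (hall (b + 1) (by omega))).mp
    (hall (b + 1 + 1) (by omega))))

lemma IsNumSgp.infinite_setOf_mem_not_dvd {S : Set ℕ} (h : IsNumSgp S) {d : ℕ} (hd : d ≠ 1) :
    {x | x ∈ S ∧ ¬ d ∣ x}.Infinite :=
  Set.infinite_of_forall_exists_gt fun b => by
    obtain ⟨x, hx, hdx⟩ := exists_lt_not_dvd hd (max b (frob S))
    exact ⟨x, ⟨h.mem_of_frob_lt_s14 ((le_max_right ..).trans_lt hx), hdx⟩, (le_max_left ..).trans_lt hx⟩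

lemma exists_isDescendant_genus_eq {S : Set ℕ} (h : IsNumSgp S) (hS : S ≠ Set.univ)
    (hω : omega' S ≠ 1) {γ : ℕ} (hγ : genus S ≤ γ) : ∃ T, IsDescendant S T ∧ genus T = γ := by
  classical
  -- below the `m`-th non-multiple of `ω` in `S` there are exactly `m` of them
  refine ⟨sieve S (omega' S) (Nat.nth (fun x => x ∈ S ∧ ¬ omega' S ∣ x) (γ - genus S)),
    isDescendant_sieve h hS _ fun _ => omega'_dvd_of_mem_leftEls, ?_⟩
  rw [genus_sieve h, Nat.count_nth_of_infinite (h.infinite_setOf_mem_not_dvd hω)]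
  omega

lemma IsDescendant.leftEls_subset {S T : Set ℕ} (hT : IsDescendant S T) : leftEls S ⊆ T :=
  fun x hx => by_contra fun hxT => (hT.2.2 x ⟨hx.1, hxT⟩).not_gt hx.2

lemma IsDescendant.closure_leftEls_subset {S T : Set ℕ} (hT : IsDescendant S T) :
    (AddSubmonoid.closure (leftEls S) : Set ℕ) ⊆ T :=
  AddSubmonoid.closure_le (S := hT.1.toAddSubmonoid).mpr hT.leftEls_subset

lemma isDescendant_closure_leftEls {S : Set ℕ} (h : IsNumSgp S) (hS : S ≠ Set.univ)
    (hgcd : Nat.setGcd (leftEls S) = 1) :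
    IsDescendant S (AddSubmonoid.closure (leftEls S)) := by
  obtain ⟨n, hn⟩ := Nat.exists_mem_closure_of_ge (leftEls S)
  have hcofinite : (AddSubmonoid.closure (leftEls S) : Set ℕ)ᶜ.Finite :=
    (Set.finite_Iio n).subset fun m hm => not_le.mp fun hnm => hm (hn m hnm (hgcd ▸ one_dvd m))
  refine ⟨⟨zero_mem _, fun _ _ => add_mem, hcofinite⟩,
    AddSubmonoid.closure_le (S := h.toAddSubmonoid).mpr fun _ hx => hx.1, fun x hx => ?_⟩
  exact h.frob_lt_of_mem_of_notMem_leftEls hS hx.1 fun hxL => hx.2 (AddSubmonoid.subset_closure hxL)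

lemma shrink_eq_closure_leftEls {S : Set ℕ} (hω : omega' S = 1) :
    shrink S = AddSubmonoid.closure (leftEls S) := by
  simp [shrink, hω]

lemma isDescendant_shrink {S : Set ℕ} (h : IsNumSgp S) (hS : S ≠ Set.univ) (hω : omega' S = 1) :
    IsDescendant S (shrink S) := by
  rw [shrink_eq_closure_leftEls hω]
  exact isDescendant_closure_leftEls h hS (by rwa [omega', setGcd_eq_natSetGcd] at hω)

lemma IsDescendant.shrink_subset {S T : Set ℕ} (hT : IsDescendant S T) (hω : omega' S = 1) :
    shrink S ⊆ T :=
  shrink_eq_closure_leftEls hω ▸ hT.closure_leftEls_subset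

/-- (i) If `ω(Λ) ≠ 1`, then `Λ ≠ ℕ` has descendants of every genus `γ ≥ g(Λ)`.
(ii) If `ω(Λ) = 1`, every descendant has genus at most `g(shrink(Λ))`, and there is
exactly one descendant of that genus. -/
theorem stmt14 (Λ : Set ℕ) (h : IsNumSgp Λ) (hne : Λ ≠ Set.univ) :
    (omega' Λ ≠ 1 →
      ∀ γ : ℕ, genus Λ ≤ γ → ∃ Λ' : Set ℕ, IsDescendant Λ Λ' ∧ genus Λ' = γ) ∧
    (omega' Λ = 1 →
      (∀ Λ' : Set ℕ, IsDescendant Λ Λ' → genus Λ' ≤ genus (shrink Λ)) ∧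
      (∃! Λ' : Set ℕ, IsDescendant Λ Λ' ∧ genus Λ' = genus (shrink Λ))) := by
  refine ⟨fun hω _ hγ => exists_isDescendant_genus_eq h hne hω hγ, fun hω => ?_⟩
  have hcofinite : (shrink Λ)ᶜ.Finite := (isDescendant_shrink h hne hω).1.cofinite
  refine ⟨fun Λ' hΛ' => genus_le_of_subset (hΛ'.shrink_subset hω) hcofinite,
    shrink Λ, ⟨isDescendant_shrink h hne hω, rfl⟩, fun Λ' ⟨hΛ', hg⟩ => ?_⟩
  exact (eq_of_subset_of_genus_eq (hΛ'.shrink_subset hω) hcofinite hg).symm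

end NumSgpPaper
end
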